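/- arXiv:0704.1640 — 2 statements merged into one kernel-verified Lean document; each statement's English description precedes it below -/
import Mathlib

section
/- Let Ω ⊆ ℂ^n be open, u : Ω → ℝ a C² function and C ≥ 0 a constant. Assume: (i) for every x ∈ Ω and every a ∈ ℂ^n, D²u(x)(a,a) + D²u(x)(i·a, i·a) ≥ 0 (u is subharmonic along every complex line, i.e. its complex Hessian is positive semidefinite); (ii) for every x ∈ Ω and every h ∈ ℂ^n with the closed segment [x−h, x+h] contained in Ω, u(x+h) + u(x−h) − 2u(x) ≤ C|h|². Then for every x ∈ Ω and every h ∈ ℂ^n one has |D²u(x)(h,h)| ≤ C|h|², where D²u(x) denotes the real second derivative of u at x on ℂ^n ≅ ℝ^{2n}. -/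
/-!
Along every line, the symmetric second difference quotient `(u(x+th) + u(x-th) - 2u(x)) / t²`
tends to `D²u(x)(h,h)` as `t → 0` (second-order Taylor expansion with Peano remainder), so
the one-sided bound on second differences gives `D²u(x)(h,h) ≤ C|h|²` for every `h`.
Plurisubharmonicity turns this into the lower bound
`D²u(x)(h,h) ≥ -D²u(x)(ih,ih) ≥ -C|ih|² = -C|h|²`.
-/

open Filter Topology Asymptotics

section Taylor

variable {E F : Type*} [NormedAddCommGroup E] [NormedSpace ℝ E]
  [NormedAddCommGroup F] [NormedSpace ℝ F]
  {f : E → F} {f' : E → E →L[ℝ] F} {f'' : E →L[ℝ] E →L[ℝ] F} {x : E}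

theorem hasDerivAt_line (x w : E) (t : ℝ) : HasDerivAt (fun t : ℝ => x + t • w) w t := by
  simpa using ((hasDerivAt_id t).smul_const w).const_add x

theorem HasFDerivAt.hasDerivAt_apply_comp_line (hf' : HasFDerivAt f' f'' x) (w : E) :
    HasDerivAt (fun t : ℝ => f' (x + t • w) w) (f'' w w) 0 := by
  simpa using (hf'.comp_hasDerivAt_of_eq 0 (hasDerivAt_line x w 0) (by simp)).clm_apply
    (hasDerivAt_const 0 w)

theorem isLittleO_taylor_two_along_line (hf : ∀ᶠ y in 𝓝 x, HasFDerivAt f (f' y) y)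
    (hf' : HasFDerivAt f' f'' x) (w : E) :
    (fun t : ℝ => f (x + t • w) - f x - t • f' x w - (t ^ 2 / 2) • f'' w w)
      =o[𝓝 0] fun t => t ^ 2 := by
  have hline : Tendsto (fun t : ℝ => x + t • w) (𝓝 0) (𝓝 x) :=
    (by fun_prop : Continuous fun t : ℝ => x + t • w).tendsto' 0 x (by simp)
  obtain ⟨δ, hδ, hball⟩ := Metric.mem_nhds_iff.1 (hline.eventually hf)
  have hnhds : 𝓝[Metric.ball 0 δ] (0 : ℝ) = 𝓝 0 :=
    nhdsWithin_eq_nhds.2 (Metric.ball_mem_nhds 0 hδ)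
  have hderiv : ∀ t ∈ Metric.ball (0 : ℝ) δ, HasDerivWithinAt
      (fun t : ℝ => f (x + t • w) - f x - t • f' x w - (t ^ 2 / 2) • f'' w w)
      (f' (x + t • w) w - f' x w - t • f'' w w) (Metric.ball 0 δ) t := by
    intro t ht
    have h1 : HasDerivAt (fun t : ℝ => f (x + t • w)) (f' (x + t • w) w) t :=
      HasFDerivAt.comp_hasDerivAt (f := fun t : ℝ => x + t • w) t (hball ht)
        (hasDerivAt_line x w t)
    have h2 := (hasDerivAt_id t).smul_const (f' x w)
    have h3 := ((hasDerivAt_pow 2 t).div_const 2).smul_const (f'' w w)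
    refine (((h1.sub_const (f x)).sub h2).sub h3).hasDerivWithinAt.congr_deriv ?_
    simp only [one_smul]
    congr 1
    rw [Nat.cast_ofNat, pow_one]
    module
  -- the remainder's derivative is `o(t)`; the mean value inequality integrates this to `o(t²)`
  have hsmall := (hf'.hasDerivAt_apply_comp_line w).isLittleO
  simp only [sub_zero, zero_smul, add_zero] at hsmall
  rw [← hnhds] at hsmall ⊢
  simpa using (convex_ball (0 : ℝ) δ).isLittleO_pow_succ_real (Metric.mem_ball_self hδ) hderiv
    (n := 1) (by simpa using hsmall)

theorem isLittleO_second_difference (hf : ∀ᶠ y in 𝓝 x, HasFDerivAt f (f' y) y)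
    (hf' : HasFDerivAt f' f'' x) (v : E) :
    (fun t : ℝ => f (x + t • v) + f (x - t • v) - (2 : ℝ) • f x - t ^ 2 • f'' v v)
      =o[𝓝 0] fun t => t ^ 2 := by
  refine ((isLittleO_taylor_two_along_line hf hf' v).add
    (isLittleO_taylor_two_along_line hf hf' (-v))).congr_left fun t => ?_
  simp only [smul_neg, map_neg, neg_apply, neg_neg, ← sub_eq_add_neg]
  module

theorem tendsto_second_difference_quotient (hf : ∀ᶠ y in 𝓝 x, HasFDerivAt f (f' y) y)
    (hf' : HasFDerivAt f' f'' x) (v : E) :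
    Tendsto (fun t : ℝ => (t ^ 2)⁻¹ • (f (x + t • v) + f (x - t • v) - (2 : ℝ) • f x))
      (𝓝[≠] 0) (𝓝 (f'' v v)) := by
  have h := (isLittleO_second_difference hf hf' v).tendsto_inv_smul_nhds_zero
    |>.mono_left (nhdsWithin_le_nhds (s := {0}ᶜ)) |>.add_const (f'' v v)
  rw [zero_add] at h
  refine h.congr' (eventually_nhdsWithin_of_forall fun t (ht : t ≠ 0) => ?_)
  rw [smul_sub, smul_smul, inv_mul_cancel₀ (pow_ne_zero 2 ht), one_smul, sub_add_cancel]

theorem second_derivative_le_of_second_difference_le {f : E → ℝ} {f' : E → E →L[ℝ] ℝ}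
    {f'' : E →L[ℝ] E →L[ℝ] ℝ} (hf : ∀ᶠ y in 𝓝 x, HasFDerivAt f (f' y) y)
    (hf' : HasFDerivAt f' f'' x) {v : E} {c : ℝ}
    (hc : ∀ᶠ t in 𝓝 (0 : ℝ), f (x + t • v) + f (x - t • v) - 2 * f x ≤ c * t ^ 2) :
    f'' v v ≤ c := by
  refine le_of_tendsto (tendsto_second_difference_quotient hf hf' v) ?_
  filter_upwards [nhdsWithin_le_nhds hc, self_mem_nhdsWithin] with t ht (ht0 : t ≠ 0)
  rw [smul_eq_mul, inv_mul_le_iff₀ (by positivity), mul_comm]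
  simpa using ht

end Taylor

theorem eventually_segment_subset {E : Type*} [NormedAddCommGroup E] [NormedSpace ℝ E]
    {s : Set E} {x : E} (hs : s ∈ 𝓝 x) (v : E) :
    ∀ᶠ t in 𝓝 (0 : ℝ), segment ℝ (x - t • v) (x + t • v) ⊆ s := by
  obtain ⟨r, hr, hball⟩ := Metric.mem_nhds_iff.1 hs
  have hsmall : ∀ᶠ t in 𝓝 (0 : ℝ), t • v ∈ Metric.ball 0 r :=
    (by fun_prop : Continuous fun t : ℝ => t • v).tendsto' 0 0 (zero_smul ℝ v)
      |>.eventually (Metric.ball_mem_nhds 0 hr)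
  filter_upwards [hsmall] with t ht
  refine ((convex_ball x r).segment_subset ?_ ?_).trans hball
  · simpa [sub_eq_add_neg] using ht
  · simpa using ht

theorem hessian_bound_of_psh_and_second_difference_bound_general
    (n : ℕ) (Ω : Set (EuclideanSpace ℂ (Fin n))) (hΩ : IsOpen Ω)
    (u : EuclideanSpace ℂ (Fin n) → ℝ) (hu : ContDiffOn ℝ 2 u Ω)
    (C : ℝ)
    (hpsh : ∀ x ∈ Ω, ∀ a : EuclideanSpace ℂ (Fin n),
      0 ≤ fderiv ℝ (fderiv ℝ u) x a a
        + fderiv ℝ (fderiv ℝ u) x (Complex.I • a) (Complex.I • a))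
    (hsec : ∀ x ∈ Ω, ∀ h : EuclideanSpace ℂ (Fin n),
      segment ℝ (x - h) (x + h) ⊆ Ω →
      u (x + h) + u (x - h) - 2 * u x ≤ C * ‖h‖ ^ 2) :
    ∀ x ∈ Ω, ∀ h : EuclideanSpace ℂ (Fin n),
      |fderiv ℝ (fderiv ℝ u) x h h| ≤ C * ‖h‖ ^ 2 := by
  intro x hx h
  have hΩx : Ω ∈ 𝓝 x := hΩ.mem_nhds hx
  have hderiv : ∀ᶠ y in 𝓝 x, HasFDerivAt u (fderiv ℝ u y) y :=
    eventually_of_mem hΩx fun y hy =>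
      ((hu.contDiffAt (hΩ.mem_nhds hy)).differentiableAt (by norm_num)).hasFDerivAt
  have hderiv2 : HasFDerivAt (fderiv ℝ u) (fderiv ℝ (fderiv ℝ u) x) x :=
    ((hu.contDiffAt hΩx).fderiv_right (m := 1) le_rfl).differentiableAt one_ne_zero
      |>.hasFDerivAt
  have upper : ∀ v, fderiv ℝ (fderiv ℝ u) x v v ≤ C * ‖v‖ ^ 2 := fun v =>
    second_derivative_le_of_second_difference_le hderiv hderiv2 <| by
      filter_upwards [eventually_segment_subset hΩx v] with t ht
      simpa [norm_smul, mul_pow, mul_comm, mul_left_comm] using hsec x hx (t • v) ht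
  have hrotated := upper (Complex.I • h)
  rw [norm_smul, Complex.norm_I, one_mul] at hrotated
  exact abs_le.2 ⟨by linarith [hpsh x hx h], upper h⟩

/-- **Two-sided Hessian bound from plurisubharmonicity and a one-sided second difference
bound.** Let `Ω ⊆ ℂ^n` be open, `u : Ω → ℝ` a `C²` function and `C ≥ 0`. Assume:
(i) the complex Hessian of `u` is positive semidefinite, i.e.
`D²u(x)(a,a) + D²u(x)(i·a, i·a) ≥ 0` for all `x ∈ Ω`, `a ∈ ℂ^n`; and
(ii) `u(x+h) + u(x−h) − 2u(x) ≤ C|h|²` whenever the segment `[x−h, x+h]` lies in `Ω`.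
Then `|D²u(x)(h,h)| ≤ C|h|²` for every `x ∈ Ω` and every `h ∈ ℂ^n`. -/
theorem hessian_bound_of_psh_and_second_difference_bound
    (n : ℕ) (Ω : Set (EuclideanSpace ℂ (Fin n))) (hΩ : IsOpen Ω)
    (u : EuclideanSpace ℂ (Fin n) → ℝ) (hu : ContDiffOn ℝ 2 u Ω)
    (C : ℝ) (hC : 0 ≤ C)
    (hpsh : ∀ x ∈ Ω, ∀ a : EuclideanSpace ℂ (Fin n),
      0 ≤ fderiv ℝ (fderiv ℝ u) x a a
        + fderiv ℝ (fderiv ℝ u) x (Complex.I • a) (Complex.I • a))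
    (hsec : ∀ x ∈ Ω, ∀ h : EuclideanSpace ℂ (Fin n),
      segment ℝ (x - h) (x + h) ⊆ Ω →
      u (x + h) + u (x - h) - 2 * u x ≤ C * ‖h‖ ^ 2) :
    ∀ x ∈ Ω, ∀ h : EuclideanSpace ℂ (Fin n),
      |fderiv ℝ (fderiv ℝ u) x h h| ≤ C * ‖h‖ ^ 2 :=
  hessian_bound_of_psh_and_second_difference_bound_general n Ω hΩ u hu C hpsh hsec
end

section
/- Let U ⊆ ℝ^m be open, K ⊆ U compact, and Φ : ℝ^p × U → ℝ^m a C¹ map such that Φ(0, y) = y for every y ∈ U, Φ(λ, y) ∈ U whenever y ∈ K and |λ| ≤ 1, and such that for every y ∈ K the partial differential ∂Φ/∂λ(0, y) : ℝ^p → ℝ^m is surjective. Suppose f : U → ℝ and C ≥ 0 satisfy |f(Φ(λ, y)) − f(y)| ≤ C|λ| for every y ∈ K and every λ ∈ ℝ^p with |λ| ≤ 1. Then there exist ε > 0 and C' ≥ 0 such that for every y ∈ K and every y' ∈ U with |y' − y| < ε one has |f(y') − f(y)| ≤ C'|y' − y|; in particular f is Lipschitz continuous on a neighborhood of K. -/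
/-!
Near `(0, y₀)` the partial maps `l ↦ Φ (l, y)` are uniformly close to the surjective linear map
`∂Φ/∂λ (0, y₀)`, so by the quantitative surjectivity behind the inverse function theorem every
`y'` close to `y = Φ (0, y)` is reached as `Φ (l, y)` with `‖l‖ ≲ ‖y' - y‖`. The flow estimate then
gives `|f y' - f y| ≤ C ‖l‖ ≲ ‖y' - y‖`, and compactness of `K` makes the constants uniform.
-/

open Set Metric Filter Topology ContinuousLinearMap
open scoped NNReal

section Surjectivity

variable {E F G : Type*} [NormedAddCommGroup E] [NormedSpace ℝ E]
  [NormedAddCommGroup F] [NormedSpace ℝ F] [NormedAddCommGroup G] [NormedSpace ℝ G]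

theorem ApproximatesLinearOn.exists_eq_of_dist_le [CompleteSpace E] {g : E → F}
    {L : E →L[ℝ] F} {r : ℝ} {c : ℝ≥0} (hg : ApproximatesLinearOn g L (closedBall 0 r) c)
    (S : L.NonlinearRightInverse) (hc : c < S.nnnorm⁻¹) {z : F}
    (hz : dist z (g 0) ≤ ((S.nnnorm : ℝ)⁻¹ - c) * r) :
    ∃ l, ((S.nnnorm : ℝ)⁻¹ - c) * ‖l‖ ≤ dist z (g 0) ∧ g l = z := by
  set σ : ℝ := (S.nnnorm : ℝ)⁻¹ - c
  have hσ : 0 < σ := sub_pos.2 (by exact_mod_cast hc)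
  set ρ := dist z (g 0) / σ
  have hρr : ρ ≤ r := (div_le_iff₀' hσ).2 hz
  have hσρ : σ * ρ = dist z (g 0) := mul_div_cancel₀ _ hσ.ne'
  have hsurjOn := (hg.mono_set (closedBall_subset_closedBall hρr))
    |>.surjOn_closedBall_of_nonlinearRightInverse S (by positivity) subset_rfl
  obtain ⟨l, hl, rfl⟩ := hsurjOn (mem_closedBall.2 hσρ.ge)
  refine ⟨l, ?_, rfl⟩
  rw [← hσρ]
  gcongr
  simpa using hl

theorem ApproximatesLinearOn.comp_prodMk_left {Φ : E × F → G} {Φ' : E × F →L[ℝ] G}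
    {s : Set (E × F)} {c : ℝ≥0} (hΦ : ApproximatesLinearOn Φ Φ' s c) (y : F) :
    ApproximatesLinearOn (fun x => Φ (x, y)) (Φ' ∘L inl ℝ E F) ((fun x => (x, y)) ⁻¹' s) c := by
  intro x hx x' hx'
  simpa [Prod.norm_def] using hΦ _ hx _ hx'

theorem HasStrictFDerivAt.exists_partial_eq_of_dist_le [CompleteSpace E] [CompleteSpace G]
    {Φ : E × F → G} {Φ' : E × F →L[ℝ] G} {y₀ : F} (hΦ : HasStrictFDerivAt Φ Φ' (0, y₀))
    (hsurj : (Φ' ∘L inl ℝ E F).range = ⊤) :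
    ∃ σ > 0, ∃ r > 0, ∀ y ∈ ball y₀ r, ∀ z, dist z (Φ (0, y)) ≤ σ * r →
      ∃ l, σ * ‖l‖ ≤ dist z (Φ (0, y)) ∧ Φ (l, y) = z := by
  set S := nonlinearRightInverseOfSurjective _ hsurj
  have hS := nonlinearRightInverseOfSurjective_nnnorm_pos _ hsurj
  have hc : S.nnnorm⁻¹ / 2 < S.nnnorm⁻¹ := NNReal.half_lt_self (inv_pos.2 hS).ne'
  obtain ⟨s, hs, hΦs⟩ :=
    hΦ.approximates_deriv_on_nhds (c := S.nnnorm⁻¹ / 2) (Or.inr (by positivity))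
  obtain ⟨δ, hδ, hδs⟩ := Metric.mem_nhds_iff.1 hs
  refine ⟨_, sub_pos.2 (by exact_mod_cast hc), δ / 2, half_pos hδ, fun y hy z hz => ?_⟩
  have hball : closedBall (0 : E) (δ / 2) ⊆ (fun x => (x, y)) ⁻¹' s := fun x hx =>
    hδs <| mem_ball.2 <| (Prod.dist_eq (x := (x, y)) (y := (0, y₀))).trans_lt <|
      max_lt ((mem_closedBall.1 hx).trans_lt (half_lt_self hδ))
        ((mem_ball.1 hy).trans (half_lt_self hδ))
  exact ((hΦs.comp_prodMk_left y).mono_set hball).exists_eq_of_dist_le S hc hz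

end Surjectivity

section UniformlyLipschitzNear

variable {X Y : Type*} [PseudoMetricSpace X] [PseudoMetricSpace Y]

def UniformlyLipschitzNear (f : X → Y) (s : Set X) : Prop :=
  ∃ ε > 0, ∃ A ≥ 0, ∀ y ∈ s, ∀ y', dist y' y < ε → dist (f y') (f y) ≤ A * dist y' y

theorem UniformlyLipschitzNear.mono {f : X → Y} {s t : Set X} (h : UniformlyLipschitzNear f t)
    (hst : s ⊆ t) : UniformlyLipschitzNear f s := by
  obtain ⟨ε, hε, A, hA, h⟩ := h
  exact ⟨ε, hε, A, hA, fun y hy => h y (hst hy)⟩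

theorem UniformlyLipschitzNear.union {f : X → Y} {s t : Set X} (hs : UniformlyLipschitzNear f s)
    (ht : UniformlyLipschitzNear f t) : UniformlyLipschitzNear f (s ∪ t) := by
  obtain ⟨ε, hε, A, hA, hs⟩ := hs
  obtain ⟨ε', hε', A', hA', ht⟩ := ht
  refine ⟨min ε ε', lt_min hε hε', max A A', le_max_of_le_left hA, ?_⟩
  rintro y (hy | hy) y' hy'
  · exact (hs y hy y' (hy'.trans_le (min_le_left _ _))).trans
      (mul_le_mul_of_nonneg_right (le_max_left _ _) dist_nonneg)
  · exact (ht y hy y' (hy'.trans_le (min_le_right _ _))).trans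
      (mul_le_mul_of_nonneg_right (le_max_right _ _) dist_nonneg)

theorem IsCompact.uniformlyLipschitzNear {f : X → Y} {K : Set X} (hK : IsCompact K)
    (h : ∀ x ∈ K, ∃ t ∈ 𝓝[K] x, UniformlyLipschitzNear f t) : UniformlyLipschitzNear f K :=
  hK.induction_on ⟨1, one_pos, 0, le_rfl, fun _ hy => hy.elim⟩ (fun _ _ hst ht => ht.mono hst)
    (fun _ _ hs ht => hs.union ht) h

end UniformlyLipschitzNear

theorem HasStrictFDerivAt.uniformlyLipschitzNear_of_flow_estimate {E F Y : Type*}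
    [NormedAddCommGroup E] [NormedSpace ℝ E] [CompleteSpace E] [NormedAddCommGroup F]
    [NormedSpace ℝ F] [CompleteSpace F] [PseudoMetricSpace Y] {Φ : E × F → F}
    {Φ' : E × F →L[ℝ] F} {y₀ : F} (hΦ : HasStrictFDerivAt Φ Φ' (0, y₀))
    (hsurj : (Φ' ∘L inl ℝ E F).range = ⊤) {K : Set F} (hΦ0 : ∀ y ∈ K, Φ (0, y) = y)
    {f : F → Y} {C : ℝ} (hC : 0 ≤ C)
    (hf : ∀ y ∈ K, ∀ l : E, ‖l‖ ≤ 1 → dist (f (Φ (l, y))) (f y) ≤ C * ‖l‖) :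
    ∃ t ∈ 𝓝[K] y₀, UniformlyLipschitzNear f t := by
  obtain ⟨σ, hσ, r, hr, hpre⟩ := hΦ.exists_partial_eq_of_dist_le hsurj
  refine ⟨K ∩ ball y₀ r, inter_mem_nhdsWithin K (ball_mem_nhds y₀ hr),
    σ * min r 1, by positivity, C / σ, by positivity, ?_⟩
  rintro y ⟨hyK, hy⟩ y' hy'
  have hy0 := hΦ0 y hyK
  obtain ⟨l, hl, rfl⟩ :=
    hpre y hy y' (by rw [hy0]; exact hy'.le.trans (by gcongr; exact min_le_left _ _))
  rw [hy0] at hl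
  have hl1 : ‖l‖ ≤ 1 := (lt_of_mul_lt_mul_left (hl.trans_lt <| hy'.trans_le <|
    mul_le_mul_of_nonneg_left (min_le_right r 1) hσ.le) hσ.le).le
  calc dist (f (Φ (l, y))) (f y) ≤ C * ‖l‖ := hf y hyK l hl1
    _ ≤ C * (dist (Φ (l, y)) y / σ) := by gcongr; rwa [le_div_iff₀' hσ]
    _ = C / σ * dist (Φ (l, y)) y := by ring

theorem lipschitz_of_flow_estimates_general
    (m p : ℕ) (U : Set (EuclideanSpace ℝ (Fin m))) (hU : IsOpen U)
    (K : Set (EuclideanSpace ℝ (Fin m))) (hK : IsCompact K) (hKU : K ⊆ U)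
    (Φ : EuclideanSpace ℝ (Fin p) × EuclideanSpace ℝ (Fin m) → EuclideanSpace ℝ (Fin m))
    (hΦ : ContDiffOn ℝ 1 Φ (Set.univ ×ˢ U))
    (hΦ0 : ∀ y ∈ U, Φ (0, y) = y)
    (hsurj : ∀ y ∈ K, Function.Surjective (fderiv ℝ (fun l => Φ (l, y)) 0))
    (f : EuclideanSpace ℝ (Fin m) → ℝ) (C : ℝ) (hC : 0 ≤ C)
    (hf : ∀ y ∈ K, ∀ l : EuclideanSpace ℝ (Fin p), ‖l‖ ≤ 1 →
      |f (Φ (l, y)) - f y| ≤ C * ‖l‖) :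
    ∃ ε > (0 : ℝ), ∃ C' ≥ (0 : ℝ), ∀ y ∈ K, ∀ y' ∈ U,
      ‖y' - y‖ < ε → |f y' - f y| ≤ C' * ‖y' - y‖ := by
  have hlocal : ∀ y₀ ∈ K, ∃ t ∈ 𝓝[K] y₀, UniformlyLipschitzNear f t := by
    intro y₀ hy₀
    have hΦ' : HasStrictFDerivAt Φ (fderiv ℝ Φ (0, y₀)) (0, y₀) :=
      (hΦ.contDiffAt (prod_mem_nhds univ_mem (hU.mem_nhds (hKU hy₀)))).hasStrictFDerivAt
        one_ne_zero
    have hpartial : fderiv ℝ (fun l => Φ (l, y₀)) 0 = fderiv ℝ Φ (0, y₀) ∘L inl ℝ _ _ :=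
      (hΦ'.hasFDerivAt.comp 0 (hasFDerivAt_prodMk_left 0 y₀)).fderiv
    refine hΦ'.uniformlyLipschitzNear_of_flow_estimate ?_ (fun y hy => hΦ0 y (hKU hy)) hC
      fun y hy l hl => (Real.dist_eq _ _).trans_le (hf y hy l hl)
    rw [LinearMap.range_eq_top, coe_coe, ← hpartial]
    exact hsurj y₀ hy₀
  obtain ⟨ε, hε, A, hA, hLip⟩ := hK.uniformlyLipschitzNear hlocal
  refine ⟨ε, hε, A, hA, fun y hy y' _ hy' => ?_⟩
  have := hLip y hy y' (by rwa [dist_eq_norm])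
  rwa [Real.dist_eq, dist_eq_norm] at this

/-- **Lipschitz continuity from one-sided estimates along a spanning family of flows.**
Let `U ⊆ ℝ^m` be open, `K ⊆ U` compact, and `Φ : ℝ^p × U → ℝ^m` a `C¹` map with
`Φ(0, y) = y` on `U`, with `Φ(λ, y) ∈ U` for `y ∈ K`, `|λ| ≤ 1`, and such that the partial
differential `∂Φ/∂λ(0, y)` is surjective for every `y ∈ K`. If `f : U → ℝ` satisfies
`|f(Φ(λ, y)) − f(y)| ≤ C|λ|` for all `y ∈ K` and `|λ| ≤ 1`, then `f` satisfies a Lipschitz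
estimate `|f(y') − f(y)| ≤ C'|y' − y|` for `y ∈ K` and `y' ∈ U` with `|y' − y| < ε`, for some
`ε > 0` and `C' ≥ 0`. -/
theorem lipschitz_of_flow_estimates
    (m p : ℕ) (U : Set (EuclideanSpace ℝ (Fin m))) (hU : IsOpen U)
    (K : Set (EuclideanSpace ℝ (Fin m))) (hK : IsCompact K) (hKU : K ⊆ U)
    (Φ : EuclideanSpace ℝ (Fin p) × EuclideanSpace ℝ (Fin m) → EuclideanSpace ℝ (Fin m))
    (hΦ : ContDiffOn ℝ 1 Φ (Set.univ ×ˢ U))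
    (hΦ0 : ∀ y ∈ U, Φ (0, y) = y)
    (hΦU : ∀ y ∈ K, ∀ l : EuclideanSpace ℝ (Fin p), ‖l‖ ≤ 1 → Φ (l, y) ∈ U)
    (hsurj : ∀ y ∈ K, Function.Surjective (fderiv ℝ (fun l => Φ (l, y)) 0))
    (f : EuclideanSpace ℝ (Fin m) → ℝ) (C : ℝ) (hC : 0 ≤ C)
    (hf : ∀ y ∈ K, ∀ l : EuclideanSpace ℝ (Fin p), ‖l‖ ≤ 1 →
      |f (Φ (l, y)) - f y| ≤ C * ‖l‖) :
    ∃ ε > (0 : ℝ), ∃ C' ≥ (0 : ℝ), ∀ y ∈ K, ∀ y' ∈ U,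
      ‖y' - y‖ < ε → |f y' - f y| ≤ C' * ‖y' - y‖ :=
  lipschitz_of_flow_estimates_general m p U hU K hK hKU Φ hΦ hΦ0 hsurj f C hC hf
end
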